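/- Let R be a Noetherian ring of prime characteristic p possessing a test element, M an R-module, I = (x_1, …, x_k) an ideal of R, z ∈ I* an element of the tight closure of I, and m ∈ M an element with x_i m ∈ 0*fg_M for all i = 1, …, k. Then z m ∈ 0*fg_M. Equivalently, for every ideal I, (0*fg_M :_M I*) = (0*fg_M :_M I). -/

import Mathlib

open scoped TensorProduct Pointwise

universe u v w

section TightClosureDefs

variable (R : Type u) [CommRing R] (p : ℕ)

/-- `R^o`: the complement of the union of the minimal primes of `R`. -/
def Ro : Set R := {c | ∀ P ∈ minimalPrimes R, c ∉ P}

/-- The Frobenius power `I^{[q]}` of an ideal: the ideal generated by the `q`-th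
powers of the elements of `I`. -/
def frobeniusPower (I : Ideal R) (q : ℕ) : Ideal R :=
  Ideal.span ((fun x => x ^ q) '' (I : Set R))

/-- The tight closure `I*` of an ideal `I`: all `x` such that `c x^q ∈ I^{[q]}` for some
`c ∈ R^o` and all `q = p^e ≫ 0`. -/
def idealTC (I : Ideal R) : Set R :=
  {x | ∃ c ∈ Ro R, ∃ e₀ : ℕ, ∀ e ≥ e₀, c * x ^ p ^ e ∈ frobeniusPower R I (p ^ e)}

/-- `R^e`: `R` viewed as an `R`-algebra via the `e`-th iterated Frobenius `r ↦ r^{p^e}`. -/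
def FrobAlg (R : Type u) [CommRing R] (_p _e : ℕ) : Type u := R

instance FrobAlg.instCommRing (e : ℕ) : CommRing (FrobAlg R p e) := inferInstanceAs (CommRing R)

noncomputable instance FrobAlg.instAlgebra (e : ℕ) [ExpChar R p] : Algebra R (FrobAlg R p e) :=
  (iterateFrobenius R p e).toAlgebra

/-- The identity map of `R` into `FrobAlg R p e`. -/
def FrobAlg.mk (e : ℕ) : R → FrobAlg R p e := id

variable [ExpChar R p]

/-- `N^{[p^e]}_M`: the image of `F^e(N) → F^e(M)`, where `F^e(M) = R^e ⊗_R M` is the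
`e`-th Frobenius functor. -/
noncomputable def submoduleFrobPow {M : Type v} [AddCommGroup M] [Module R M]
    (N : Submodule R M) (e : ℕ) : Submodule R (FrobAlg R p e ⊗[R] M) :=
  LinearMap.range (LinearMap.lTensor (FrobAlg R p e) N.subtype)

/-- The tight closure `N*_M` of a submodule `N ⊆ M`: all `m` such that
`c ⊗ m ∈ N^{[q]}_M` for some `c ∈ R^o` and all `q = p^e ≫ 0`. -/
noncomputable def moduleTC {M : Type v} [AddCommGroup M] [Module R M]
    (N : Submodule R M) : Set M :=
  {m | ∃ c ∈ Ro R, ∃ e₀ : ℕ, ∀ e ≥ e₀,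
    (FrobAlg.mk R p e c) ⊗ₜ[R] m ∈ submoduleFrobPow R p N e}

/-- The finitistic tight closure `N*fg_M`: the union of `(N ∩ M')*_{M'}` over all
finitely generated submodules `M' ⊆ M`. -/
noncomputable def finitisticTC {M : Type v} [AddCommGroup M] [Module R M]
    (N : Submodule R M) : Set M :=
  ⋃ (M' : Submodule R M) (_ : M'.FG),
    (M'.subtype '' moduleTC R p (N.comap M'.subtype))

/-- A test element: `c ∈ R^o` such that `c I* ⊆ I` for every ideal `I`. -/
def IsTestElement (c : R) : Prop :=
  c ∈ Ro R ∧ ∀ I : Ideal R, ∀ x ∈ idealTC R p I, c * x ∈ I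

/-- A module test element: `c ∈ R^o` such that for every finitely generated module `M`,
every submodule `N ⊆ M`, every `x ∈ N*_M` and every `q = p^e`, `c ⊗ x ∈ N^{[q]}_M`. -/
def IsModuleTestElement (c : R) : Prop :=
  c ∈ Ro R ∧ ∀ (M : Type u) [AddCommGroup M] [Module R M], Module.Finite R M →
    ∀ (N : Submodule R M), ∀ x ∈ moduleTC R p N, ∀ e : ℕ,
      (FrobAlg.mk R p e c) ⊗ₜ[R] x ∈ submoduleFrobPow R p N e

/-- The annihilator, inside the Matlis-type dual `Hom_R(M, E)`, of a subset `S ⊆ M`. -/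
def annihilatorIn {M : Type v} {E : Type w} [AddCommGroup M] [Module R M]
    [AddCommGroup E] [Module R E] (S : Set M) : Submodule R (M →ₗ[R] E) where
  carrier := {f | ∀ x ∈ S, f x = 0}
  add_mem' := by intro f g hf hg x hx; simp [hf x hx, hg x hx]
  zero_mem' := by intro x hx; simp
  smul_mem' := by intro r f hf x hx; simp [hf x hx]

/-- The product `s · T` of a set of ring elements and a submodule: the submodule
generated by all products `a • t` with `a ∈ s`, `t ∈ T`. -/
def setSMulSubmodule {M : Type v} [AddCommGroup M] [Module R M]
    (s : Set R) (T : Submodule R M) : Submodule R M :=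
  Submodule.span R (s • (T : Set M))

/-- `E` is an injective hull of `M` over `R`: `E` is an injective module admitting an
essential embedding of `M`. -/
def IsInjectiveHull (M : Type v) (E : Type w) [AddCommGroup M] [Module R M]
    [AddCommGroup E] [Module R E] : Prop :=
  Module.Injective R E ∧ ∃ ι : M →ₗ[R] E, Function.Injective ι ∧
    ∀ N : Submodule R E, N ≠ ⊥ → N ⊓ LinearMap.range ι ≠ ⊥

/-- The test ideal `τ(R) = ⋂_M Ann_R (0*_M)`, where `M` runs through all finitely
generated `R`-modules. -/
noncomputable def testIdeal : Ideal R where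
  carrier := {c | ∀ (M : Type u) [AddCommGroup M] [Module R M], Module.Finite R M →
    ∀ x ∈ moduleTC R p (⊥ : Submodule R M), c • x = 0}
  add_mem' := by
    intro a b ha hb M _ _ hfin x hx
    rw [add_smul, ha M hfin x hx, hb M hfin x hx, add_zero]
  zero_mem' := by intro M _ _ hfin x hx; rw [zero_smul]
  smul_mem' := by
    intro r a ha M _ _ hfin x hx
    rw [smul_eq_mul, mul_smul, ha M hfin x hx, smul_zero]

/-- An `F`-finite ring: `R` is finitely generated as a module over its subring of
`p`-th powers, i.e. `R^1` is a finite `R`-module. -/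
def IsFFinite : Prop := Module.Finite R (FrobAlg R p 1)

/-- An ideal generated by a system of parameters: generated by `dim R` elements and
with radical the maximal ideal (i.e. primary to the maximal ideal). -/
def IsParameterIdeal [IsLocalRing R] (I : Ideal R) : Prop :=
  ∃ (n : ℕ) (x : Fin n → R), ringKrullDim R = n ∧ I = Ideal.span (Set.range x) ∧
    I.radical = IsLocalRing.maximalIdeal R

/-- The parameter test ideal `τ_par(R) = ⋂_I (I : I*)`, where `I` runs through the
ideals generated by systems of parameters. -/
def parameterTestIdeal [IsLocalRing R] : Ideal R where
  carrier := {c | ∀ I : Ideal R, IsParameterIdeal R I → ∀ z ∈ idealTC R p I, c * z ∈ I}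
  add_mem' := by
    intro a b ha hb I hI z hz
    rw [add_mul]; exact I.add_mem (ha I hI z hz) (hb I hI z hz)
  zero_mem' := by intro I hI z hz; rw [zero_mul]; exact I.zero_mem
  smul_mem' := by
    intro r a ha I hI z hz
    rw [smul_eq_mul, mul_assoc]; exact I.mul_mem_left r (ha I hI z hz)

/-- A parameter test element: an element of `τ_par(R) ∩ R^o`. -/
def IsParameterTestElement [IsLocalRing R] (c : R) : Prop :=
  c ∈ parameterTestIdeal R p ∧ c ∈ Ro R

end TightClosureDefs

/-- A Cohen–Macaulay local ring: a local ring admitting a system of parameters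
(`dim R` elements generating an ideal whose radical is the maximal ideal, here expressed
as the Jacobson radical `(⊥).jacobson`) that is a regular sequence. -/
def IsCohenMacaulayLocalRing (R : Type u) [CommRing R] : Prop :=
  IsLocalRing R ∧ ∃ (n : ℕ) (x : Fin n → R), ringKrullDim R = n ∧
    (Ideal.span (Set.range x)).radical = (⊥ : Ideal R).jacobson ∧
    RingTheory.Sequence.IsRegular R (List.ofFn x)


/-!
If `cᵢ` kills `xᵢ m` in `Fᵉ(M)` for `e ≫ 0` and `d z^q = ∑ aᵢ xᵢ^q`, then `d ∏ cᵢ` kills `z m`: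
in `Fᵉ(M)` one has `d (∏ cᵢ) ⊗ z m = ∑ aᵢ (∏_{j ≠ i} cⱼ) · (cᵢ ⊗ xᵢ m) = 0`. For the
finitistic closure one runs this argument in the finitely generated submodule generated by `m`
and by the submodules witnessing `xᵢ m ∈ 0*fg_M`. Over a Noetherian ring every ideal has finitely
many generators, which gives the colon equality.
-/

section Ro

variable (R : Type u) [CommRing R]

def roSubmonoid : Submonoid R where
  carrier := Ro R
  one_mem' P hP h1 := hP.1.1.ne_top ((Ideal.eq_top_iff_one P).mpr h1)
  mul_mem' hc hd P hP hcd := (hP.1.1.mem_or_mem hcd).elim (hc P hP) (hd P hP)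

variable {R} {p : ℕ}

theorem mem_idealTC_of_mem {I : Ideal R} {a : R} (ha : a ∈ I) : a ∈ idealTC R p I :=
  ⟨1, (roSubmonoid R).one_mem, 0, fun _ _ => by
    rw [one_mul]
    exact Ideal.subset_span ⟨a, ha, rfl⟩⟩

end Ro

section Frobenius

variable {R : Type u} [CommRing R] {p : ℕ} [ExpChar R p]

theorem frobeniusPower_eq_map (I : Ideal R) (e : ℕ) :
    frobeniusPower R I (p ^ e) = I.map (iterateFrobenius R p e) :=
  rfl

theorem frobeniusPower_span_range {ι : Type*} (x : ι → R) (e : ℕ) :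
    frobeniusPower R (Ideal.span (Set.range x)) (p ^ e) =
      Ideal.span (Set.range fun i => x i ^ p ^ e) := by
  rw [frobeniusPower_eq_map, Ideal.map_span, ← Set.range_comp]
  rfl

end Frobenius

section FrobeniusAnnihilator

variable {R : Type u} [CommRing R] {p : ℕ} [ExpChar R p]
  {M : Type v} [AddCommGroup M] [Module R M] {N : Type w} [AddCommGroup N] [Module R N]

variable (R p) in
def frobeniusAnnihilator (e : ℕ) (m : M) : Ideal R where
  carrier := {c | FrobAlg.mk R p e c ⊗ₜ[R] m = 0}
  add_mem' {a b} ha hb := by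
    change (FrobAlg.mk R p e a + FrobAlg.mk R p e b) ⊗ₜ[R] m = 0
    rw [TensorProduct.add_tmul, ha, hb, add_zero]
  zero_mem' := TensorProduct.zero_tmul _ m
  smul_mem' b a ha := by
    change (FrobAlg.mk R p e b • FrobAlg.mk R p e a) ⊗ₜ[R] m = 0
    rw [← TensorProduct.smul_tmul', ha, smul_zero]

theorem mem_frobeniusAnnihilator {e : ℕ} {m : M} {c : R} :
    c ∈ frobeniusAnnihilator R p e m ↔ FrobAlg.mk R p e c ⊗ₜ[R] m = 0 :=
  Iff.rfl

theorem mem_frobeniusAnnihilator_smul {e : ℕ} {m : M} {c r : R} :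
    c ∈ frobeniusAnnihilator R p e (r • m) ↔ r ^ p ^ e * c ∈ frobeniusAnnihilator R p e m := by
  rw [mem_frobeniusAnnihilator, TensorProduct.tmul_smul, TensorProduct.smul_tmul']
  rfl

theorem frobeniusAnnihilator_le_map (f : M →ₗ[R] N) (e : ℕ) (m : M) :
    frobeniusAnnihilator R p e m ≤ frobeniusAnnihilator R p e (f m) := fun c hc => by
  rw [mem_frobeniusAnnihilator] at hc ⊢
  simpa using congrArg (LinearMap.lTensor (FrobAlg R p e) f) hc

theorem submoduleFrobPow_bot (e : ℕ) : submoduleFrobPow R p (⊥ : Submodule R M) e = ⊥ := by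
  rw [submoduleFrobPow, Subsingleton.elim (⊥ : Submodule R M).subtype 0, LinearMap.lTensor_zero,
    LinearMap.range_zero]

theorem mem_moduleTC_bot_iff {m : M} :
    m ∈ moduleTC R p (⊥ : Submodule R M) ↔
      ∃ c ∈ Ro R, ∃ e₀ : ℕ, ∀ e ≥ e₀, c ∈ frobeniusAnnihilator R p e m := by
  simp only [moduleTC, submoduleFrobPow_bot, Submodule.mem_bot, Set.mem_ofPred_eq,
    mem_frobeniusAnnihilator]

theorem map_mem_moduleTC_bot (f : M →ₗ[R] N) {m : M}
    (hm : m ∈ moduleTC R p (⊥ : Submodule R M)) : f m ∈ moduleTC R p (⊥ : Submodule R N) := by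
  obtain ⟨c, hc, e₀, he₀⟩ := mem_moduleTC_bot_iff.mp hm
  exact mem_moduleTC_bot_iff.mpr
    ⟨c, hc, e₀, fun e he => frobeniusAnnihilator_le_map f e m (he₀ e he)⟩

theorem smul_mem_moduleTC_bot_of_mem_idealTC {k : ℕ} {x : Fin k → R} {z : R} {m : M}
    (hz : z ∈ idealTC R p (Ideal.span (Set.range x)))
    (hxm : ∀ i, x i • m ∈ moduleTC R p (⊥ : Submodule R M)) :
    z • m ∈ moduleTC R p (⊥ : Submodule R M) := by
  obtain ⟨d, hd, e₁, hde⟩ := hz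
  choose c hc e₀ hce using fun i => mem_moduleTC_bot_iff.mp (hxm i)
  refine mem_moduleTC_bot_iff.mpr ⟨d * ∏ i, c i, (roSubmonoid R).mul_mem hd
      ((roSubmonoid R).prod_mem fun i _ => hc i), max e₁ (Finset.univ.sup e₀), fun e he => ?_⟩
  set J := frobeniusAnnihilator R p e m
  have hxc : ∀ i, x i ^ p ^ e * ∏ j, c j ∈ J := fun i =>
    J.mem_of_dvd (mul_dvd_mul_left _ (Finset.dvd_prod_of_mem c (Finset.mem_univ i)))
      (mem_frobeniusAnnihilator_smul.mp
        (hce i e ((Finset.le_sup (Finset.mem_univ i)).trans ((le_max_right _ _).trans he))))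
  have hspan : Ideal.span (Set.range fun i => x i ^ p ^ e) ≤ J.colon {∏ i, c i} :=
    Ideal.span_le.mpr <| Set.range_subset_iff.mpr fun i =>
      Submodule.mem_colon_singleton.mpr (hxc i)
  have hdz : d * z ^ p ^ e ∈ Ideal.span (Set.range fun i => x i ^ p ^ e) := by
    rw [← frobeniusPower_span_range]
    exact hde e ((le_max_left _ _).trans he)
  rw [mem_frobeniusAnnihilator_smul, ← mul_assoc, mul_comm _ d]
  exact Submodule.mem_colon_singleton.mp (hspan hdz)

end FrobeniusAnnihilator

section Finitistic

variable {R : Type u} [CommRing R] {p : ℕ} [ExpChar R p] {M : Type v} [AddCommGroup M] [Module R M]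

theorem mem_finitisticTC_bot_iff {m : M} :
    m ∈ finitisticTC R p (⊥ : Submodule R M) ↔
      ∃ M' : Submodule R M, M'.FG ∧ ∃ y ∈ moduleTC R p (⊥ : Submodule R M'), (y : M) = m := by
  simp [finitisticTC]

theorem smul_mem_finitisticTC_bot_of_mem_idealTC {k : ℕ} {x : Fin k → R} {z : R} {m : M}
    (hz : z ∈ idealTC R p (Ideal.span (Set.range x)))
    (hxm : ∀ i, x i • m ∈ finitisticTC R p (⊥ : Submodule R M)) :
    z • m ∈ finitisticTC R p (⊥ : Submodule R M) := by
  choose Mᵢ hMᵢ y hy hym using fun i => mem_finitisticTC_bot_iff.mp (hxm i)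
  set M' := (⨆ i, Mᵢ i) ⊔ Submodule.span R {m}
  have hle : ∀ i, Mᵢ i ≤ M' := fun i => (le_iSup Mᵢ i).trans le_sup_left
  let m' : M' := ⟨m, Submodule.mem_sup_right (Submodule.mem_span_singleton_self m)⟩
  have hxm' : ∀ i, x i • m' ∈ moduleTC R p (⊥ : Submodule R M') := fun i => by
    have hincl : Submodule.inclusion (hle i) (y i) = x i • m' := Subtype.ext (hym i)
    exact hincl ▸ map_mem_moduleTC_bot _ (hy i)
  exact mem_finitisticTC_bot_iff.mpr
    ⟨M', (Submodule.fg_iSup Mᵢ hMᵢ).sup (Submodule.fg_span_singleton m), z • m',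
      smul_mem_moduleTC_bot_of_mem_idealTC hz hxm', rfl⟩

theorem colon_finitisticTC_bot_idealTC_eq {I : Ideal R} (hI : I.FG) :
    {m : M | ∀ z ∈ idealTC R p I, z • m ∈ finitisticTC R p (⊥ : Submodule R M)} =
      {m : M | ∀ a ∈ I, a • m ∈ finitisticTC R p (⊥ : Submodule R M)} := by
  obtain ⟨k, x, rfl⟩ := Submodule.fg_iff_exists_fin_generating_family.mp hI
  refine Set.ext fun m => ⟨fun h a ha => h a (mem_idealTC_of_mem ha), fun h z hz => ?_⟩
  exact smul_mem_finitisticTC_bot_of_mem_idealTC hz fun i => h _ (Submodule.subset_span ⟨i, rfl⟩)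

end Finitistic

theorem colon_finitistic_tight_closure_eq_general
    (R : Type u) [CommRing R] [IsNoetherianRing R]
    (p : ℕ) [Fact p.Prime] [CharP R p]
    (M : Type v) [AddCommGroup M] [Module R M] :
    (∀ (k : ℕ) (x : Fin k → R) (z : R) (m : M),
        z ∈ idealTC R p (Ideal.span (Set.range x)) →
        (∀ i : Fin k, x i • m ∈ finitisticTC R p (⊥ : Submodule R M)) →
        z • m ∈ finitisticTC R p (⊥ : Submodule R M)) ∧
    (∀ I : Ideal R,
        {m : M | ∀ z ∈ idealTC R p I, z • m ∈ finitisticTC R p (⊥ : Submodule R M)} =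
        {m : M | ∀ a ∈ I, a • m ∈ finitisticTC R p (⊥ : Submodule R M)}) :=
  ⟨fun _ _ _ _ hz hxm => smul_mem_finitisticTC_bot_of_mem_idealTC hz hxm,
    fun I => colon_finitisticTC_bot_idealTC_eq (IsNoetherian.noetherian I)⟩

/-- Let `R` be a Noetherian ring of prime characteristic `p` possessing
a test element, `M` an `R`-module, `I = (x_1, …, x_k)` an ideal, `z ∈ I*` and `m ∈ M`
with `x_i m ∈ 0*fg_M` for all `i`.  Then `z m ∈ 0*fg_M`; equivalently,
`(0*fg_M :_M I*) = (0*fg_M :_M I)` for every ideal `I`. -/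
theorem colon_finitistic_tight_closure_eq
    (R : Type u) [CommRing R] [IsNoetherianRing R]
    (p : ℕ) [Fact p.Prime] [CharP R p]
    (htest : ∃ c : R, IsModuleTestElement R p c)
    (M : Type v) [AddCommGroup M] [Module R M] :
    (∀ (k : ℕ) (x : Fin k → R) (z : R) (m : M),
        z ∈ idealTC R p (Ideal.span (Set.range x)) →
        (∀ i : Fin k, x i • m ∈ finitisticTC R p (⊥ : Submodule R M)) →
        z • m ∈ finitisticTC R p (⊥ : Submodule R M)) ∧
    (∀ I : Ideal R,
        {m : M | ∀ z ∈ idealTC R p I, z • m ∈ finitisticTC R p (⊥ : Submodule R M)} =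
        {m : M | ∀ a ∈ I, a • m ∈ finitisticTC R p (⊥ : Submodule R M)}) :=
  colon_finitistic_tight_closure_eq_general R p M
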